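/- arXiv:2508.10944 — 6 statements merged into one kernel-verified Lean document; each statement's English description precedes it below -/
import Mathlib

section
/- Fix d ≥ 1, γ ∈ (0,1], σ > 0 and f ∈ ℝ^d. Let q₀ : ℝ^d → [0,∞) be measurable and satisfy q₀(y₀) ≤ c₁ exp(−c₂ ‖y₀‖²/2) for all y₀ ∈ ℝ^d, for constants c₁, c₂ > 0. Define q(y) = (σ^d (2π)^{d/2})^{-1} ∫_{ℝ^d} q₀(y₀) exp( −‖ y − γ y₀ − (1−γ) f ‖² / (2σ²) ) dy₀. Then for every y ∈ ℝ^d: q(y) ≤ c₁ (γ² + c₂ σ²)^{−d/2} exp( −c₂ ‖ y − (1−γ) f ‖² / ( 2 (γ² + c₂ σ²) ) ). -/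
/-!
Replacing `q₀` by its Gaussian envelope `c₁ e^{-c₂‖y₀‖²/2}` makes the integrand a product of two
Gaussians in `y₀`. Completing the square, with `z = y - (1-γ)f` and `A = γ² + c₂σ²`, this product is
`e^{-c₂‖z‖²/(2A)}` times a Gaussian in `y₀` of precision `A/σ²` centred at `(γ/A)z`, whose
integral `(2πσ²/A)^{d/2}` cancels the normalisation up to the factor `A^{-d/2}`.
-/

open MeasureTheory Real

section GaussianKernel

variable {V : Type*} [NormedAddCommGroup V] [InnerProductSpace ℝ V]

lemma exp_neg_sq_norm_mul_exp_neg_sq_norm_sub_smul {c γ σ : ℝ} (hσ : σ ≠ 0)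
    (hA : γ ^ 2 + c * σ ^ 2 ≠ 0) (z x : V) :
    rexp (-c * ‖x‖ ^ 2 / 2) * rexp (-‖z - γ • x‖ ^ 2 / (2 * σ ^ 2)) =
      rexp (-c * ‖z‖ ^ 2 / (2 * (γ ^ 2 + c * σ ^ 2))) *
        rexp (-((γ ^ 2 + c * σ ^ 2) / (2 * σ ^ 2)) *
          ‖x - (γ / (γ ^ 2 + c * σ ^ 2)) • z‖ ^ 2) := by
  rw [← exp_add, ← exp_add]
  congr 1
  rw [norm_sub_sq_real, norm_sub_sq_real, norm_smul, norm_smul, real_inner_smul_right,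
    real_inner_smul_right, real_inner_comm x z]
  simp only [Real.norm_eq_abs, mul_pow, sq_abs]
  field_simp
  ring

variable [FiniteDimensional ℝ V] [MeasurableSpace V] [BorelSpace V]

lemma integral_rexp_neg_mul_sq_norm_sub {b : ℝ} (hb : 0 < b) (m : V) :
    ∫ v, rexp (-b * ‖v - m‖ ^ 2) = (π / b) ^ (Module.finrank ℝ V / 2 : ℝ) := by
  rw [integral_sub_right_eq_self (fun v ↦ rexp (-b * ‖v‖ ^ 2)) m]
  exact GaussianFourier.integral_rexp_neg_mul_sq_norm hb

lemma integrable_rexp_neg_mul_sq_norm_sub {b : ℝ} (hb : 0 < b) (m : V) :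
    Integrable fun v ↦ rexp (-b * ‖v - m‖ ^ 2) :=
  Integrable.of_integral_ne_zero <| by
    rw [integral_rexp_neg_mul_sq_norm_sub hb m]
    positivity

theorem integral_mul_exp_neg_sq_norm_sub_smul_le {g : V → ℝ} {c₁ c₂ γ σ : ℝ}
    (hc₂ : 0 < c₂) (hσ : 0 < σ) (hg₀ : ∀ x, 0 ≤ g x)
    (hg : ∀ x, g x ≤ c₁ * rexp (-c₂ * ‖x‖ ^ 2 / 2)) (z : V) :
    ∫ x, g x * rexp (-‖z - γ • x‖ ^ 2 / (2 * σ ^ 2)) ≤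
      c₁ * rexp (-c₂ * ‖z‖ ^ 2 / (2 * (γ ^ 2 + c₂ * σ ^ 2))) *
        (2 * π * σ ^ 2 / (γ ^ 2 + c₂ * σ ^ 2)) ^ (Module.finrank ℝ V / 2 : ℝ) := by
  set A := γ ^ 2 + c₂ * σ ^ 2
  have hA : 0 < A := by positivity
  have hb : 0 < A / (2 * σ ^ 2) := by positivity
  have hpointwise : ∀ x, g x * rexp (-‖z - γ • x‖ ^ 2 / (2 * σ ^ 2)) ≤
      c₁ * rexp (-c₂ * ‖z‖ ^ 2 / (2 * A)) * rexp (-(A / (2 * σ ^ 2)) * ‖x - (γ / A) • z‖ ^ 2) :=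
    fun x ↦ calc
      _ ≤ c₁ * rexp (-c₂ * ‖x‖ ^ 2 / 2) * rexp (-‖z - γ • x‖ ^ 2 / (2 * σ ^ 2)) := by
        gcongr
        exact hg x
      _ = _ := by
        rw [mul_assoc, exp_neg_sq_norm_mul_exp_neg_sq_norm_sub_smul hσ.ne' hA.ne', mul_assoc]
  calc
    _ ≤ ∫ x, c₁ * rexp (-c₂ * ‖z‖ ^ 2 / (2 * A)) *
          rexp (-(A / (2 * σ ^ 2)) * ‖x - (γ / A) • z‖ ^ 2) :=
      integral_mono_of_nonneg (.of_forall fun x ↦ mul_nonneg (hg₀ x) (exp_nonneg _))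
        ((integrable_rexp_neg_mul_sq_norm_sub hb _).const_mul _) (.of_forall hpointwise)
    _ = _ := by
      rw [integral_const_mul, integral_rexp_neg_mul_sq_norm_sub hb]
      congr 2
      field_simp

end GaussianKernel

lemma two_pi_mul_sq_div_rpow_half (d : ℕ) {σ A : ℝ} (hσ : 0 ≤ σ) (hA : 0 ≤ A) :
    (2 * π * σ ^ 2 / A) ^ (d / 2 : ℝ) = σ ^ d * (2 * π) ^ (d / 2 : ℝ) * A ^ (-d / 2 : ℝ) := by
  have hσd : (σ ^ 2) ^ (d / 2 : ℝ) = σ ^ d := by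
    rw [← rpow_natCast σ 2, ← rpow_mul hσ, ← rpow_natCast σ d]
    congr 1
    push_cast
    ring
  rw [div_eq_mul_inv, mul_rpow (by positivity) (inv_nonneg.mpr hA),
    mul_rpow (by positivity) (by positivity), inv_rpow hA, ← rpow_neg hA, neg_div, hσd]
  ring

theorem diffused_density_upper_bound_general
    (d : ℕ) (γ σ : ℝ) (hσ : 0 < σ)
    (f : EuclideanSpace ℝ (Fin d))
    (q₀ : EuclideanSpace ℝ (Fin d) → ℝ)
    (hq₀nn : ∀ y₀, 0 ≤ q₀ y₀)
    (c₁ c₂ : ℝ) (hc₂ : 0 < c₂)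
    (htail : ∀ y₀, q₀ y₀ ≤ c₁ * Real.exp (-c₂ * ‖y₀‖ ^ 2 / 2))
    (q : EuclideanSpace ℝ (Fin d) → ℝ)
    (hq : ∀ y, q y = (σ ^ d * (2 * Real.pi) ^ ((d : ℝ) / 2))⁻¹ *
        ∫ y₀, q₀ y₀ * Real.exp (-‖y - γ • y₀ - (1 - γ) • f‖ ^ 2 / (2 * σ ^ 2))) :
    ∀ y, q y ≤ c₁ * (γ ^ 2 + c₂ * σ ^ 2) ^ (-(d : ℝ) / 2) *
        Real.exp (-c₂ * ‖y - (1 - γ) • f‖ ^ 2 / (2 * (γ ^ 2 + c₂ * σ ^ 2))) := by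
  intro y
  have hnorm : 0 < σ ^ d * (2 * π) ^ ((d : ℝ) / 2) := by positivity
  have hshift : ∀ y₀ : EuclideanSpace ℝ (Fin d),
      y - γ • y₀ - (1 - γ) • f = (y - (1 - γ) • f) - γ • y₀ := fun y₀ ↦ by abel
  have hbound := integral_mul_exp_neg_sq_norm_sub_smul_le (γ := γ) hc₂ hσ hq₀nn htail
    (y - (1 - γ) • f)
  rw [finrank_euclideanSpace_fin, two_pi_mul_sq_div_rpow_half d hσ.le (by positivity)]
    at hbound
  rw [hq y, inv_mul_le_iff₀ hnorm]
  simp_rw [hshift]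
  linarith

/-- Upper bound of Lemma 1 of the paper: if the original conditional density `q₀` has a
Gaussian light tail `q₀(y₀) ≤ c₁ e^{−c₂‖y₀‖²/2}`, then the diffused conditional density
`q(y) = (σ^d (2π)^{d/2})⁻¹ ∫ q₀(y₀) e^{−‖y−γy₀−(1−γ)f‖²/(2σ²)} dy₀` satisfies
`q(y) ≤ c₁ (γ²+c₂σ²)^{−d/2} e^{−c₂‖y−(1−γ)f‖²/(2(γ²+c₂σ²))}`. -/
theorem diffused_density_upper_bound
    (d : ℕ) (hd : 1 ≤ d) (γ σ : ℝ) (hγ : γ ∈ Set.Ioc (0:ℝ) 1) (hσ : 0 < σ)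
    (f : EuclideanSpace ℝ (Fin d))
    (q₀ : EuclideanSpace ℝ (Fin d) → ℝ)
    (hq₀m : Measurable q₀) (hq₀nn : ∀ y₀, 0 ≤ q₀ y₀)
    (c₁ c₂ : ℝ) (hc₁ : 0 < c₁) (hc₂ : 0 < c₂)
    (htail : ∀ y₀, q₀ y₀ ≤ c₁ * Real.exp (-c₂ * ‖y₀‖ ^ 2 / 2))
    (q : EuclideanSpace ℝ (Fin d) → ℝ)
    (hq : ∀ y, q y = (σ ^ d * (2 * Real.pi) ^ ((d : ℝ) / 2))⁻¹ *
        ∫ y₀, q₀ y₀ * Real.exp (-‖y - γ • y₀ - (1 - γ) • f‖ ^ 2 / (2 * σ ^ 2))) :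
    ∀ y, q y ≤ c₁ * (γ ^ 2 + c₂ * σ ^ 2) ^ (-(d : ℝ) / 2) *
        Real.exp (-c₂ * ‖y - (1 - γ) • f‖ ^ 2 / (2 * (γ ^ 2 + c₂ * σ ^ 2))) :=
  diffused_density_upper_bound_general d γ σ hσ f q₀ hq₀nn c₁ c₂ hc₂ htail q hq
end

section
/- Fix d ≥ 1, γ ∈ (0,1], σ > 0, R > 0 and f ∈ ℝ^d. Let q₀ : ℝ^d → [0,∞) be measurable, and define q(y) = (σ^d (2π)^{d/2})^{-1} ∫_{ℝ^d} q₀(y₀) exp( −‖ y − γ y₀ − (1−γ) f ‖² / (2σ²) ) dy₀. Set c₃ = (2π)^{−d/2} ∫_{‖y₀‖ ≤ R} q₀(y₀) dy₀ (integral over the Euclidean ball of radius R). Then for every y ∈ ℝ^d: q(y) ≥ (c₃ / σ^d) · exp( −( ‖y‖² + 2 (1−γ)² ‖f‖² + 2 γ² R² ) / σ² ). -/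
open MeasureTheory

/-- Lower bound of Lemma 1 of the paper (truncation ball in the Euclidean norm):
with `c₃ = (2π)^{−d/2} ∫_{‖y₀‖ ≤ R} q₀`, the diffused conditional density satisfies
`q(y) ≥ (c₃/σ^d) exp(−(‖y‖² + 2(1−γ)²‖f‖² + 2γ²R²)/σ²)`. -/
theorem diffused_density_lower_bound
    (d : ℕ) (hd : 1 ≤ d) (γ σ : ℝ) (hγ : γ ∈ Set.Ioc (0:ℝ) 1) (hσ : 0 < σ)
    (R : ℝ) (hR : 0 < R)
    (f : EuclideanSpace ℝ (Fin d))
    (q₀ : EuclideanSpace ℝ (Fin d) → ℝ)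
    (hq₀m : Measurable q₀) (hq₀nn : ∀ y₀, 0 ≤ q₀ y₀)
    (hq₀int : Integrable q₀)
    (q : EuclideanSpace ℝ (Fin d) → ℝ)
    (hq : ∀ y, q y = (σ ^ d * (2 * Real.pi) ^ ((d : ℝ) / 2))⁻¹ *
        ∫ y₀, q₀ y₀ * Real.exp (-‖y - γ • y₀ - (1 - γ) • f‖ ^ 2 / (2 * σ ^ 2)))
    (c₃ : ℝ)
    (hc₃ : c₃ = (2 * Real.pi) ^ (-(d : ℝ) / 2) *
        ∫ y₀ in Metric.closedBall (0 : EuclideanSpace ℝ (Fin d)) R, q₀ y₀) :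
    ∀ y, (c₃ / σ ^ d) *
        Real.exp (-(‖y‖ ^ 2 + 2 * (1 - γ) ^ 2 * ‖f‖ ^ 2 + 2 * γ ^ 2 * R ^ 2) / σ ^ 2)
      ≤ q y := by
  intro y
  obtain ⟨hγ0, hγ1⟩ := hγ
  have hσ2 : (0:ℝ) < σ ^ 2 := by positivity
  set K : ℝ := Real.exp (-(‖y‖ ^ 2 + 2 * (1 - γ) ^ 2 * ‖f‖ ^ 2 + 2 * γ ^ 2 * R ^ 2) / σ ^ 2)
    with hK
  set B := Metric.closedBall (0 : EuclideanSpace ℝ (Fin d)) R with hB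
  set g : EuclideanSpace ℝ (Fin d) → ℝ :=
    fun y₀ => q₀ y₀ * Real.exp (-‖y - γ • y₀ - (1 - γ) • f‖ ^ 2 / (2 * σ ^ 2)) with hg
  have hgnn : ∀ y₀, 0 ≤ g y₀ := fun y₀ => mul_nonneg (hq₀nn y₀) (Real.exp_nonneg _)
  have hgcont : Continuous fun y₀ : EuclideanSpace ℝ (Fin d) =>
      Real.exp (-‖y - γ • y₀ - (1 - γ) • f‖ ^ 2 / (2 * σ ^ 2)) := by
    fun_prop
  have hgint : Integrable g := by
    refine hq₀int.mono (hq₀m.aestronglyMeasurable.mul hgcont.aestronglyMeasurable)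
      (Filter.Eventually.of_forall fun y₀ => ?_)
    rw [Real.norm_eq_abs, Real.norm_eq_abs, abs_mul, abs_of_nonneg (hq₀nn y₀),
      abs_of_nonneg (Real.exp_nonneg _)]
    have : Real.exp (-‖y - γ • y₀ - (1 - γ) • f‖ ^ 2 / (2 * σ ^ 2)) ≤ 1 := by
      rw [Real.exp_le_one_iff]
      apply div_nonpos_of_nonpos_of_nonneg
      · simp [sq_nonneg]
      · positivity
    nlinarith [hq₀nn y₀]
  -- pointwise bound on the ball
  have hpt : ∀ y₀ ∈ B, q₀ y₀ * K ≤ g y₀ := by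
    intro y₀ hy₀
    have hy₀R : ‖y₀‖ ≤ R := by
      rw [hB] at hy₀; simpa using hy₀
    have hnorm : ‖y - γ • y₀ - (1 - γ) • f‖ ^ 2
        ≤ 2 * ‖y‖ ^ 2 + 4 * (1 - γ) ^ 2 * ‖f‖ ^ 2 + 4 * γ ^ 2 * R ^ 2 := by
      have h1 : ‖y - γ • y₀ - (1 - γ) • f‖ ≤ ‖y‖ + (γ * ‖y₀‖ + (1 - γ) * ‖f‖) := by
        calc ‖y - γ • y₀ - (1 - γ) • f‖ = ‖y - (γ • y₀ + (1 - γ) • f)‖ := by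
              rw [sub_sub]
          _ ≤ ‖y‖ + ‖γ • y₀ + (1 - γ) • f‖ := norm_sub_le _ _
          _ ≤ ‖y‖ + (‖γ • y₀‖ + ‖(1 - γ) • f‖) := by
              gcongr; exact norm_add_le _ _
          _ = ‖y‖ + (γ * ‖y₀‖ + (1 - γ) * ‖f‖) := by
              rw [norm_smul, norm_smul, Real.norm_eq_abs, Real.norm_eq_abs,
                abs_of_pos hγ0, abs_of_nonneg (by linarith)]
      have h2 : (0:ℝ) ≤ ‖y - γ • y₀ - (1 - γ) • f‖ := norm_nonneg _
      have h3 : (0:ℝ) ≤ ‖y‖ := norm_nonneg _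
      have h4 : (0:ℝ) ≤ ‖y₀‖ := norm_nonneg _
      have h5 : (0:ℝ) ≤ ‖f‖ := norm_nonneg _
      have hsq := mul_self_le_mul_self h2 h1
      have hsq2 := mul_self_le_mul_self h4 hy₀R
      nlinarith [sq_nonneg (‖y‖ - (γ * ‖y₀‖ + (1 - γ) * ‖f‖)),
        sq_nonneg (γ * ‖y₀‖ - (1 - γ) * ‖f‖), sq_nonneg γ,
        mul_le_mul_of_nonneg_left hsq2 (mul_self_nonneg γ)]
    have hKle : K ≤ Real.exp (-‖y - γ • y₀ - (1 - γ) • f‖ ^ 2 / (2 * σ ^ 2)) := by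
      rw [hK]
      apply Real.exp_le_exp.2
      rw [div_le_div_iff₀ (by positivity) (by positivity)]
      nlinarith [hσ2]
    calc q₀ y₀ * K ≤ q₀ y₀ * Real.exp (-‖y - γ • y₀ - (1 - γ) • f‖ ^ 2 / (2 * σ ^ 2)) :=
          mul_le_mul_of_nonneg_left hKle (hq₀nn y₀)
      _ = g y₀ := rfl
  have hBmeas : MeasurableSet B := Metric.isClosed_closedBall.measurableSet
  have hInt1 : (∫ y₀ in B, q₀ y₀ * K) ≤ ∫ y₀ in B, g y₀ := by
    refine setIntegral_mono_on (hq₀int.integrableOn.mul_const K) hgint.integrableOn hBmeas hpt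
  have hInt2 : (∫ y₀ in B, g y₀) ≤ ∫ y₀, g y₀ :=
    setIntegral_le_integral hgint (Filter.Eventually.of_forall hgnn)
  have hIball : (∫ y₀ in B, q₀ y₀ * K) = (∫ y₀ in B, q₀ y₀) * K := by
    rw [integral_mul_const]
  have hpi : (0:ℝ) < 2 * Real.pi := by positivity
  have hCpos : (0:ℝ) < (σ ^ d * (2 * Real.pi) ^ ((d : ℝ) / 2))⁻¹ := by
    have := Real.rpow_pos_of_pos hpi ((d : ℝ) / 2)
    positivity
  have hrw : c₃ / σ ^ d * K
      = (σ ^ d * (2 * Real.pi) ^ ((d : ℝ) / 2))⁻¹ * ((∫ y₀ in B, q₀ y₀) * K) := by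
    rw [hc₃, neg_div, Real.rpow_neg (le_of_lt hpi), mul_inv]
    ring
  rw [hq y, hrw]
  apply mul_le_mul_of_nonneg_left _ (le_of_lt hCpos)
  calc (∫ y₀ in B, q₀ y₀) * K = ∫ y₀ in B, q₀ y₀ * K := hIball.symm
    _ ≤ ∫ y₀ in B, g y₀ := hInt1
    _ ≤ ∫ y₀, g y₀ := hInt2
end

section
/- Fix d ≥ 1, γ ∈ (0,1], σ > 0 and f ∈ ℝ^d, and let q₀ : ℝ^d → [0,∞) be measurable with q₀(y₀) ≤ c₁ exp(−c₂ ‖y₀‖²/2) for all y₀, for constants c₁, c₂ > 0. Write A = γ² + c₂ σ². For i ∈ {1,…,d} define G_i(y) = (σ^d (2π)^{d/2})^{-1} ∫_{ℝ^d} ( (y_i − γ y_{0,i} − (1−γ) f_i)/σ² ) · q₀(y₀) · exp( −‖ y − γ y₀ − (1−γ) f ‖² / (2σ²) ) dy₀ (this is, up to sign, the i-th partial derivative of the diffused conditional density). Then for every y ∈ ℝ^d and every i: |G_i(y)| ≤ c₁ A^{−d/2} · exp( −c₂ ‖ y − (1−γ) f ‖² / (2A) ) · ( c₂ | y_i − (1−γ)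 f_i | / A + γ / ( σ √A ) ). -/
/-!
Write `z = y - (1 - γ) f`. Against the tail bound on `q₀`, the Gaussian kernel
`exp (-‖z - γ y₀‖² / (2σ²))` combines, after completing the square in `y₀`, into
`exp (-c₂‖z‖² / (2A)) · exp (-A ‖y₀ - m‖² / (2σ²))` with `m = (γ / A) z`. Around this new mean the
prefactor splits as `z_i - γ y₀_i = (c₂σ² / A) z_i - γ (y₀ - m)_i`, so `|G_i(y)|` is dominated by
the zeroth and first absolute moments of a centred Gaussian, both computable coordinatewise.
-/

open MeasureTheory Real

theorem integral_abs_mul_exp_neg_mul_sq {b : ℝ} (hb : 0 < b) :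
    ∫ t : ℝ, |t| * exp (-b * t ^ 2) = b⁻¹ := by
  have h := integral_rpow_mul_exp_neg_mul_rpow two_pos (by norm_num) hb (q := 1)
  simp only [rpow_one, rpow_two] at h
  have := integral_comp_abs (f := fun t => t * exp (-b * t ^ 2))
  simp only [sq_abs] at this
  rw [this, h]
  norm_num [rpow_neg_one]
  ring

theorem integrable_abs_mul_exp_neg_mul_sq {b : ℝ} (hb : 0 < b) :
    Integrable fun t : ℝ => |t| * exp (-b * t ^ 2) := by
  simpa [abs_mul] using (integrable_mul_exp_neg_mul_sq hb).abs

theorem Fintype.prod_ite_eq_mul_pow {ι M : Type*} [Fintype ι] [DecidableEq ι] [CommMonoid M]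
    (i : ι) (a c : M) : ∏ j, (if j = i then a else c) = a * c ^ (Fintype.card ι - 1) := by
  rw [Finset.prod_ite, Finset.filter_eq', Finset.filter_ne', if_pos (Finset.mem_univ i)]
  simp [Finset.card_erase_of_mem]

section CompleteSquare

variable {E : Type*} [NormedAddCommGroup E] [InnerProductSpace ℝ E] {γ c σ A : ℝ}

theorem gaussian_exponent_complete_square (hA : A = γ ^ 2 + c * σ ^ 2) (hA0 : A ≠ 0)
    (hσ : σ ≠ 0) (z x : E) :
    c * ‖x‖ ^ 2 / 2 + ‖z - γ • x‖ ^ 2 / (2 * σ ^ 2) =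
      A / (2 * σ ^ 2) * ‖x - (γ / A) • z‖ ^ 2 + c * ‖z‖ ^ 2 / (2 * A) := by
  rw [norm_sub_sq_real, norm_sub_sq_real, real_inner_smul_right, real_inner_smul_right,
    norm_smul, norm_smul, mul_pow, mul_pow, Real.norm_eq_abs, Real.norm_eq_abs, sq_abs, sq_abs,
    real_inner_comm]
  field_simp
  rw [hA]
  ring

theorem mul_exp_neg_norm_sub_smul_sq_le {q : E → ℝ} {c₁ : ℝ}
    (htail : ∀ x, q x ≤ c₁ * exp (-c * ‖x‖ ^ 2 / 2)) (hA : A = γ ^ 2 + c * σ ^ 2)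
    (hA0 : A ≠ 0) (hσ : σ ≠ 0) (z x : E) :
    q x * exp (-‖z - γ • x‖ ^ 2 / (2 * σ ^ 2)) ≤
      c₁ * exp (-c * ‖z‖ ^ 2 / (2 * A)) * exp (-(A / (2 * σ ^ 2)) * ‖x - (γ / A) • z‖ ^ 2) := by
  calc q x * exp (-‖z - γ • x‖ ^ 2 / (2 * σ ^ 2))
      ≤ c₁ * exp (-c * ‖x‖ ^ 2 / 2) * exp (-‖z - γ • x‖ ^ 2 / (2 * σ ^ 2)) := by
        gcongr; exact htail x
    _ = _ := by
        rw [mul_assoc, mul_assoc, ← exp_add, ← exp_add]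
        congr 2
        linear_combination -gaussian_exponent_complete_square hA hA0 hσ z x

end CompleteSquare

namespace EuclideanSpace

variable {ι : Type*} [Fintype ι]

theorem integrable_prod_apply {g : ι → ℝ → ℝ} (hg : ∀ j, Integrable (g j)) :
    Integrable fun v : EuclideanSpace ℝ ι => ∏ j, g j (v j) :=
  (PiLp.volume_preserving_ofLp ι).integrable_comp_emb
    (MeasurableEquiv.toLp 2 (ι → ℝ)).symm.measurableEmbedding |>.mpr (.fintype_prod_dep hg)

theorem integral_prod_apply (g : ι → ℝ → ℝ) :
    ∫ v : EuclideanSpace ℝ ι, ∏ j, g j (v j) = ∏ j, ∫ t, g j t := by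
  rw [← integral_fintype_prod_volume_eq_prod g,
    ← (volume_preserving_symm_measurableEquiv_toLp ι).integral_comp']
  rfl

theorem exp_neg_mul_norm_sq (b : ℝ) (v : EuclideanSpace ℝ ι) :
    exp (-b * ‖v‖ ^ 2) = ∏ j, exp (-b * v j ^ 2) := by
  rw [real_norm_sq_eq, Finset.mul_sum, exp_sum]

theorem abs_apply_mul_exp_neg_mul_norm_sq [DecidableEq ι] (i : ι) (b : ℝ)
    (v : EuclideanSpace ℝ ι) :
    |v i| * exp (-b * ‖v‖ ^ 2) = ∏ j, (if j = i then |v j| else 1) * exp (-b * v j ^ 2) := by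
  rw [Finset.prod_mul_distrib, Fintype.prod_ite_eq', exp_neg_mul_norm_sq]

variable {b : ℝ}

theorem integrable_exp_neg_mul_norm_sq (hb : 0 < b) :
    Integrable fun v : EuclideanSpace ℝ ι => exp (-b * ‖v‖ ^ 2) := by
  simp_rw [exp_neg_mul_norm_sq]
  exact integrable_prod_apply fun _ => integrable_exp_neg_mul_sq hb

theorem integral_exp_neg_mul_norm_sq (b : ℝ) :
    ∫ v : EuclideanSpace ℝ ι, exp (-b * ‖v‖ ^ 2) = √(π / b) ^ Fintype.card ι := by
  simp_rw [exp_neg_mul_norm_sq]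
  rw [integral_prod_apply (fun _ t => exp (-b * t ^ 2))]
  simp only [integral_gaussian, Finset.prod_const, Finset.card_univ]

theorem integrable_abs_apply_mul_exp_neg_mul_norm_sq (i : ι) (hb : 0 < b) :
    Integrable fun v : EuclideanSpace ℝ ι => |v i| * exp (-b * ‖v‖ ^ 2) := by
  classical
  simp_rw [abs_apply_mul_exp_neg_mul_norm_sq i]
  refine integrable_prod_apply (g := fun j t => (if j = i then |t| else 1) * exp (-b * t ^ 2))
    fun j => ?_
  split_ifs
  · exact integrable_abs_mul_exp_neg_mul_sq hb
  · simpa only [one_mul] using integrable_exp_neg_mul_sq hb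

theorem integral_abs_apply_mul_exp_neg_mul_norm_sq (i : ι) (hb : 0 < b) :
    ∫ v : EuclideanSpace ℝ ι, |v i| * exp (-b * ‖v‖ ^ 2) =
      b⁻¹ * √(π / b) ^ (Fintype.card ι - 1) := by
  classical
  simp_rw [abs_apply_mul_exp_neg_mul_norm_sq i]
  rw [integral_prod_apply (fun j t => (if j = i then |t| else 1) * exp (-b * t ^ 2))]
  have factor (j : ι) : ∫ t, (if j = i then |t| else 1) * exp (-b * t ^ 2) =
      if j = i then b⁻¹ else √(π / b) := by
    split_ifs
    · exact integral_abs_mul_exp_neg_mul_sq hb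
    · simpa only [one_mul] using integral_gaussian b
  simp only [factor]
  exact Fintype.prod_ite_eq_mul_pow i _ _

theorem integrable_add_abs_apply_sub_mul_exp (i : ι) (m : EuclideanSpace ℝ ι) (α β : ℝ)
    (hb : 0 < b) :
    Integrable fun x : EuclideanSpace ℝ ι => (α + β * |(x - m) i|) * exp (-b * ‖x - m‖ ^ 2) := by
  simp_rw [add_mul, mul_assoc]
  exact (((integrable_exp_neg_mul_norm_sq hb).const_mul α).add
    ((integrable_abs_apply_mul_exp_neg_mul_norm_sq i hb).const_mul β)).comp_sub_right m

theorem integral_add_abs_apply_sub_mul_exp (i : ι) (m : EuclideanSpace ℝ ι) (α β : ℝ)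
    (hb : 0 < b) :
    ∫ x : EuclideanSpace ℝ ι, (α + β * |(x - m) i|) * exp (-b * ‖x - m‖ ^ 2) =
      α * √(π / b) ^ Fintype.card ι + β * (b⁻¹ * √(π / b) ^ (Fintype.card ι - 1)) := by
  rw [integral_sub_right_eq_self (fun v => (α + β * |v i|) * exp (-b * ‖v‖ ^ 2)) m]
  simp_rw [add_mul, mul_assoc]
  rw [integral_add ((integrable_exp_neg_mul_norm_sq hb).const_mul α)
      ((integrable_abs_apply_mul_exp_neg_mul_norm_sq i hb).const_mul β),
    integral_const_mul, integral_const_mul, integral_exp_neg_mul_norm_sq,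
    integral_abs_apply_mul_exp_neg_mul_norm_sq i hb]

variable {q : EuclideanSpace ℝ ι → ℝ} {γ σ c₁ c A : ℝ}

theorem abs_gradient_integrand_le (hq : ∀ x, 0 ≤ q x)
    (htail : ∀ x, q x ≤ c₁ * exp (-c * ‖x‖ ^ 2 / 2)) (hc : 0 ≤ c) (hγ : 0 ≤ γ)
    (hA : A = γ ^ 2 + c * σ ^ 2) (hA0 : 0 < A) (hσ : σ ≠ 0) (z x : EuclideanSpace ℝ ι) (i : ι) :
    |(z i - γ * x i) / σ ^ 2 * q x * exp (-‖z - γ • x‖ ^ 2 / (2 * σ ^ 2))| ≤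
      c₁ * exp (-c * ‖z‖ ^ 2 / (2 * A)) * ((c / A * |z i| + γ / σ ^ 2 * |(x - (γ / A) • z) i|) *
        exp (-(A / (2 * σ ^ 2)) * ‖x - (γ / A) • z‖ ^ 2)) := by
  have hcoord : z i - γ * x i = c * σ ^ 2 / A * z i - γ * (x - (γ / A) • z) i := by
    simp only [PiLp.sub_apply, PiLp.smul_apply, smul_eq_mul]
    field_simp
    rw [hA]
    ring
  have hcoord_le : |z i - γ * x i| ≤ c * σ ^ 2 / A * |z i| + γ * |(x - (γ / A) • z) i| := by
    rw [hcoord]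
    refine (abs_sub _ _).trans_eq ?_
    rw [abs_mul, abs_mul, abs_of_nonneg (by positivity : 0 ≤ c * σ ^ 2 / A), abs_of_nonneg hγ]
  have hkernel := mul_exp_neg_norm_sub_smul_sq_le htail hA hA0.ne' hσ z x
  rw [abs_mul, abs_mul, abs_div, abs_of_nonneg (hq x), abs_of_nonneg (exp_pos _).le,
    abs_of_nonneg (sq_nonneg σ), mul_assoc, div_mul_eq_mul_div]
  calc |z i - γ * x i| * (q x * exp (-‖z - γ • x‖ ^ 2 / (2 * σ ^ 2))) / σ ^ 2
      ≤ (c * σ ^ 2 / A * |z i| + γ * |(x - (γ / A) • z) i|) *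
          (c₁ * exp (-c * ‖z‖ ^ 2 / (2 * A)) *
            exp (-(A / (2 * σ ^ 2)) * ‖x - (γ / A) • z‖ ^ 2)) / σ ^ 2 := by
        gcongr
        exact mul_nonneg (hq x) (exp_pos _).le
    _ = _ := by field_simp

theorem abs_integral_gradient_integrand_le (hq : ∀ x, 0 ≤ q x)
    (htail : ∀ x, q x ≤ c₁ * exp (-c * ‖x‖ ^ 2 / 2)) (hc : 0 ≤ c) (hγ : 0 ≤ γ)
    (hA : A = γ ^ 2 + c * σ ^ 2) (hA0 : 0 < A) (hσ : σ ≠ 0) (z : EuclideanSpace ℝ ι) (i : ι) :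
    |∫ x, (z i - γ * x i) / σ ^ 2 * q x * exp (-‖z - γ • x‖ ^ 2 / (2 * σ ^ 2))| ≤
      c₁ * exp (-c * ‖z‖ ^ 2 / (2 * A)) *
        (c / A * |z i| * √(π / (A / (2 * σ ^ 2))) ^ Fintype.card ι +
          γ / σ ^ 2 * ((A / (2 * σ ^ 2))⁻¹ * √(π / (A / (2 * σ ^ 2))) ^ (Fintype.card ι - 1))) := by
  have hb : 0 < A / (2 * σ ^ 2) := by positivity
  calc |∫ x, (z i - γ * x i) / σ ^ 2 * q x * exp (-‖z - γ • x‖ ^ 2 / (2 * σ ^ 2))|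
      ≤ ∫ x, |(z i - γ * x i) / σ ^ 2 * q x * exp (-‖z - γ • x‖ ^ 2 / (2 * σ ^ 2))| :=
        abs_integral_le_integral_abs
    _ ≤ ∫ x, c₁ * exp (-c * ‖z‖ ^ 2 / (2 * A)) *
          ((c / A * |z i| + γ / σ ^ 2 * |(x - (γ / A) • z) i|) *
            exp (-(A / (2 * σ ^ 2)) * ‖x - (γ / A) • z‖ ^ 2)) :=
        integral_mono_of_nonneg (ae_of_all _ fun _ => abs_nonneg _)
          ((integrable_add_abs_apply_sub_mul_exp i _ _ _ hb).const_mul _)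
          (ae_of_all _ fun x => abs_gradient_integrand_le hq htail hc hγ hA hA0 hσ z x i)
    _ = _ := by rw [integral_const_mul, integral_add_abs_apply_sub_mul_exp i _ _ _ hb]

end EuclideanSpace

section Normalization

variable {σ A : ℝ}

theorem sqrt_pi_div_div (hσ : 0 < σ) (hA : 0 < A) :
    √(π / (A / (2 * σ ^ 2))) = σ * √(2 * π) / √A := by
  rw [show π / (A / (2 * σ ^ 2)) = σ ^ 2 * (2 * π) / A by field_simp,
    sqrt_div' _ hA.le, sqrt_mul (sq_nonneg σ), sqrt_sq hσ.le]

theorem gaussian_prefactor_eq (d : ℕ) (hA : 0 < A) :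
    (σ ^ d * (2 * π) ^ ((d : ℝ) / 2))⁻¹ = A ^ (-(d : ℝ) / 2) * (√A / (σ * √(2 * π))) ^ d := by
  rw [rpow_div_two_eq_sqrt _ (by positivity), neg_div, rpow_neg hA.le,
    rpow_div_two_eq_sqrt _ hA.le, rpow_natCast, rpow_natCast, div_pow, mul_pow]
  have : 0 < √A := sqrt_pos.2 hA
  field_simp

theorem gaussian_prefactor_mul_sqrt_pi_div_pow (d : ℕ) (hσ : 0 < σ) (hA : 0 < A) :
    (σ ^ d * (2 * π) ^ ((d : ℝ) / 2))⁻¹ * √(π / (A / (2 * σ ^ 2))) ^ d = A ^ (-(d : ℝ) / 2) := by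
  rw [gaussian_prefactor_eq d hA, sqrt_pi_div_div hσ hA, mul_assoc, ← mul_pow]
  have : 0 < √A := sqrt_pos.2 hA
  have : 0 < √(2 * π) := sqrt_pos.2 (by positivity)
  field_simp
  simp

theorem gaussian_prefactor_mul_moment_le {d : ℕ} (hd : 0 < d) (hσ : 0 < σ) (hA : 0 < A) :
    (σ ^ d * (2 * π) ^ ((d : ℝ) / 2))⁻¹ *
        (1 / σ ^ 2 * ((A / (2 * σ ^ 2))⁻¹ * √(π / (A / (2 * σ ^ 2))) ^ (d - 1))) ≤
      A ^ (-(d : ℝ) / 2) / (σ * √A) := by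
  -- the two sides differ exactly by the factor `2 / √(2π) < 1`
  obtain ⟨n, rfl⟩ := Nat.exists_eq_add_one_of_ne_zero hd.ne'
  rw [gaussian_prefactor_eq _ hA, sqrt_pi_div_div hσ hA, Nat.add_sub_cancel]
  have hr : 0 < √A := sqrt_pos.2 hA
  have hs : 2 ≤ √(2 * π) := le_sqrt_of_sq_le (by nlinarith [pi_gt_three])
  have hrA : √A ^ 2 = A := sq_sqrt hA.le
  rw [div_pow, mul_pow, pow_succ, pow_succ, pow_succ]
  field_simp
  calc 2 * √A ^ n * √A ^ 2 * (σ * √(2 * π) / √A) ^ n = σ ^ n * √(2 * π) ^ n * A * 2 := by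
        rw [div_pow, mul_pow, hrA]
        field_simp
    _ ≤ σ ^ n * √(2 * π) ^ n * √(2 * π) * A := by
        rw [mul_right_comm _ (√(2 * π))]
        gcongr

end Normalization

theorem diffused_density_gradient_bound_general
    (d : ℕ) (γ σ : ℝ) (hγ : γ ∈ Set.Ioc (0:ℝ) 1) (hσ : 0 < σ)
    (f : EuclideanSpace ℝ (Fin d))
    (q₀ : EuclideanSpace ℝ (Fin d) → ℝ)
    (hq₀nn : ∀ y₀, 0 ≤ q₀ y₀)
    (c₁ c₂ : ℝ) (hc₁ : 0 < c₁) (hc₂ : 0 < c₂)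
    (htail : ∀ y₀, q₀ y₀ ≤ c₁ * Real.exp (-c₂ * ‖y₀‖ ^ 2 / 2))
    (A : ℝ) (hA : A = γ ^ 2 + c₂ * σ ^ 2)
    (G : Fin d → EuclideanSpace ℝ (Fin d) → ℝ)
    (hG : ∀ i y, G i y = (σ ^ d * (2 * Real.pi) ^ ((d : ℝ) / 2))⁻¹ *
        ∫ y₀, ((y i - γ * y₀ i - (1 - γ) * f i) / σ ^ 2) * q₀ y₀ *
          Real.exp (-‖y - γ • y₀ - (1 - γ) • f‖ ^ 2 / (2 * σ ^ 2))) :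
    ∀ (y : EuclideanSpace ℝ (Fin d)) (i : Fin d),
      |G i y| ≤ c₁ * A ^ (-(d : ℝ) / 2) *
          Real.exp (-c₂ * ‖y - (1 - γ) • f‖ ^ 2 / (2 * A)) *
          (c₂ * |y i - (1 - γ) * f i| / A + γ / (σ * Real.sqrt A)) := by
  intro y i
  have hγ0 : 0 < γ := hγ.1
  have hA0 : 0 < A := by rw [hA]; positivity
  set z := y - (1 - γ) • f
  have hz : y i - (1 - γ) * f i = z i := by simp [z]
  have hshift (y₀ : EuclideanSpace ℝ (Fin d)) : y - γ • y₀ - (1 - γ) • f = z - γ • y₀ := by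
    simp only [z]; abel
  have hbound := EuclideanSpace.abs_integral_gradient_integrand_le hq₀nn htail hc₂.le hγ0.le
    hA hA0 hσ.ne' z i
  rw [Fintype.card_fin] at hbound
  simp_rw [hG, hshift, sub_right_comm (y i), hz, abs_mul,
    abs_of_pos (inv_pos.2 (by positivity : 0 < σ ^ d * (2 * π) ^ ((d : ℝ) / 2)))]
  calc _ ≤ (σ ^ d * (2 * π) ^ ((d : ℝ) / 2))⁻¹ * _ :=
        mul_le_mul_of_nonneg_left hbound (by positivity)
    _ = c₁ * exp (-c₂ * ‖z‖ ^ 2 / (2 * A)) * (c₂ / A * |z i| *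
          ((σ ^ d * (2 * π) ^ ((d : ℝ) / 2))⁻¹ * √(π / (A / (2 * σ ^ 2))) ^ d) +
        γ * ((σ ^ d * (2 * π) ^ ((d : ℝ) / 2))⁻¹ *
          (1 / σ ^ 2 * ((A / (2 * σ ^ 2))⁻¹ * √(π / (A / (2 * σ ^ 2))) ^ (d - 1))))) := by ring
    _ ≤ c₁ * exp (-c₂ * ‖z‖ ^ 2 / (2 * A)) * (c₂ / A * |z i| * A ^ (-(d : ℝ) / 2) +
        γ * (A ^ (-(d : ℝ) / 2) / (σ * √A))) := by
      rw [gaussian_prefactor_mul_sqrt_pi_div_pow d hσ hA0]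
      gcongr
      exact gaussian_prefactor_mul_moment_le i.pos hσ hA0
    _ = _ := by ring

/-- Lemma 2 of the paper: bound on the (i-th component of the) gradient of the diffused
conditional density. With `A = γ² + c₂σ²`,
`G_i(y) = (σ^d(2π)^{d/2})⁻¹ ∫ ((y_i − γ y_{0,i} − (1−γ)f_i)/σ²) q₀(y₀)
            e^{−‖y−γy₀−(1−γ)f‖²/(2σ²)} dy₀`
satisfies `|G_i(y)| ≤ c₁ A^{−d/2} e^{−c₂‖y−(1−γ)f‖²/(2A)} (c₂|y_i−(1−γ)f_i|/A + γ/(σ√A))`. -/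
theorem diffused_density_gradient_bound
    (d : ℕ) (hd : 1 ≤ d) (γ σ : ℝ) (hγ : γ ∈ Set.Ioc (0:ℝ) 1) (hσ : 0 < σ)
    (f : EuclideanSpace ℝ (Fin d))
    (q₀ : EuclideanSpace ℝ (Fin d) → ℝ)
    (hq₀m : Measurable q₀) (hq₀nn : ∀ y₀, 0 ≤ q₀ y₀)
    (c₁ c₂ : ℝ) (hc₁ : 0 < c₁) (hc₂ : 0 < c₂)
    (htail : ∀ y₀, q₀ y₀ ≤ c₁ * Real.exp (-c₂ * ‖y₀‖ ^ 2 / 2))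
    (A : ℝ) (hA : A = γ ^ 2 + c₂ * σ ^ 2)
    (G : Fin d → EuclideanSpace ℝ (Fin d) → ℝ)
    (hG : ∀ i y, G i y = (σ ^ d * (2 * Real.pi) ^ ((d : ℝ) / 2))⁻¹ *
        ∫ y₀, ((y i - γ * y₀ i - (1 - γ) * f i) / σ ^ 2) * q₀ y₀ *
          Real.exp (-‖y - γ • y₀ - (1 - γ) • f‖ ^ 2 / (2 * σ ^ 2))) :
    ∀ (y : EuclideanSpace ℝ (Fin d)) (i : Fin d),
      |G i y| ≤ c₁ * A ^ (-(d : ℝ) / 2) *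
          Real.exp (-c₂ * ‖y - (1 - γ) • f‖ ^ 2 / (2 * A)) *
          (c₂ * |y i - (1 - γ) * f i| / A + γ / (σ * Real.sqrt A)) :=
  diffused_density_gradient_bound_general d γ σ hγ hσ f q₀ hq₀nn c₁ c₂ hc₁ hc₂ htail A hA G hG
end

section
/- Fix d ≥ 1, γ ∈ (0,1], σ > 0 and f ∈ ℝ^d. Let q₀ be a probability density on ℝ^d satisfying q₀(y₀) ≤ c₁ exp(−c₂ ‖y₀‖²/2) for all y₀ (constants c₁, c₂ > 0), and define the diffused conditional density q(y) = (σ^d (2π)^{d/2})^{-1} ∫_{ℝ^d} q₀(y₀) exp( −‖ y − γ y₀ − (1−γ) f ‖² / (2σ²) ) dy₀ (q is then strictly positive and differentiable, with ∂_i q(y) obtained by differentiating under the integral sign). Fix y ∈ ℝ^d, ε_low > 0 and a truncation radius ρ > 0, and suppose: (i) q(y) ≥ ε_low, and (ii) for each i ∈ {1,…,d}, ∫_{‖y₀‖_∞ > ρ} ( | y_i − γ y_{0,i} − (1−γ) f_i | / σ² ) · q₀(y₀) · (σ^d (2π)^{d/2})^{-1} exp( −‖ y − γ y₀ − (1−γ)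 f ‖² / (2σ²) ) dy₀ ≤ ε_low. Then ‖ ∇ log q(y) ‖_∞ ≤ ( ‖y‖_∞ + γ ρ + (1−γ) ‖f‖_∞ ) / σ² + 1. -/
/-!
Writing `∂ᵢq(y) = -C ∫ Fᵢ`, split `∫ |Fᵢ|` along the cube `‖y₀‖_∞ ≤ ρ`. Outside the cube the
contribution is at most `ε_low ≤ q(y)` by the truncation hypothesis. Inside it the drift
`|yᵢ - γ y₀ᵢ - (1-γ) fᵢ|` is at most `‖y‖_∞ + γρ + (1-γ)‖f‖_∞`, so that part is at most this
constant over `σ²` times `q(y)`. Dividing by `q(y)` gives the bound.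
-/

open MeasureTheory

noncomputable def supNorm {d : ℕ} (v : EuclideanSpace ℝ (Fin d)) : ℝ := ⨆ i, |v i|

section SupNorm

variable {d : ℕ}

lemma abs_apply_le_supNorm (v : EuclideanSpace ℝ (Fin d)) (i : Fin d) : |v i| ≤ supNorm v :=
  le_ciSup (f := fun j => |v j|) (Set.finite_range _).bddAbove i

lemma supNorm_nonneg (v : EuclideanSpace ℝ (Fin d)) : 0 ≤ supNorm v :=
  Real.iSup_nonneg fun _ => abs_nonneg _

lemma measurable_supNorm : Measurable (supNorm : EuclideanSpace ℝ (Fin d) → ℝ) :=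
  Measurable.iSup fun i => (EuclideanSpace.proj (𝕜 := ℝ) i).continuous.measurable.abs

lemma abs_sub_mul_sub_mul_le_of_supNorm_le {γ ρ : ℝ} (hγ₀ : 0 ≤ γ) (hγ₁ : γ ≤ 1)
    (y x f : EuclideanSpace ℝ (Fin d)) (hx : supNorm x ≤ ρ) (i : Fin d) :
    |y i - γ * x i - (1 - γ) * f i| ≤ supNorm y + γ * ρ + (1 - γ) * supNorm f := by
  calc |y i - γ * x i - (1 - γ) * f i|
      ≤ |y i| + |γ * x i| + |(1 - γ) * f i| :=
        (abs_sub _ _).trans (add_le_add_left (abs_sub _ _) _)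
    _ = |y i| + γ * |x i| + (1 - γ) * |f i| := by
        rw [abs_mul, abs_mul, abs_of_nonneg hγ₀, abs_of_nonneg (sub_nonneg.2 hγ₁)]
    _ ≤ supNorm y + γ * ρ + (1 - γ) * supNorm f := by
        have := abs_apply_le_supNorm y i
        have := (abs_apply_le_supNorm x i).trans hx
        have := abs_apply_le_supNorm f i
        have := sub_nonneg.2 hγ₁
        gcongr

end SupNorm

section SplitIntegral

variable {α : Type*} [MeasurableSpace α] {μ : Measure α} {S : Set α} {F G : α → ℝ} {K : ℝ}

theorem integral_abs_le_setIntegral_add_mul (hS : MeasurableSet S) (hK : 0 ≤ K)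
    (hG : Integrable G μ) (hG₀ : 0 ≤ᵐ[μ] G) (hFG : ∀ x ∈ Sᶜ, |F x| ≤ K * G x) :
    ∫ x, |F x| ∂μ ≤ ∫ x in S, |F x| ∂μ + K * ∫ x, G x ∂μ := by
  by_cases hF : Integrable (fun x => |F x|) μ
  · rw [← integral_add_compl hS hF]
    gcongr
    calc ∫ x in Sᶜ, |F x| ∂μ ≤ ∫ x in Sᶜ, K * G x ∂μ :=
          setIntegral_mono_on hF.integrableOn (hG.const_mul K).integrableOn hS.compl hFG
      _ = K * ∫ x in Sᶜ, G x ∂μ := integral_const_mul K _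
      _ ≤ K * ∫ x, G x ∂μ := mul_le_mul_of_nonneg_left (setIntegral_le_integral hG hG₀) hK
  · rw [integral_undef hF]
    exact add_nonneg (setIntegral_nonneg hS fun _ _ => abs_nonneg _)
      (mul_nonneg hK (integral_nonneg_of_ae hG₀))

theorem abs_integral_le_mul_integral_of_setIntegral_abs_le (hS : MeasurableSet S) (hK : 0 ≤ K)
    (hG : Integrable G μ) (hG₀ : 0 ≤ᵐ[μ] G) (hFG : ∀ x ∈ Sᶜ, |F x| ≤ K * G x)
    (hFS : ∫ x in S, |F x| ∂μ ≤ ∫ x, G x ∂μ) :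
    |∫ x, F x ∂μ| ≤ (K + 1) * ∫ x, G x ∂μ := by
  have := integral_abs_le_setIntegral_add_mul hS hK hG hG₀ hFG
  linarith [abs_integral_le_integral_abs (f := F) (μ := μ)]

end SplitIntegral

theorem conditional_score_bound_general
    (d : ℕ) (γ σ : ℝ) (hγ : γ ∈ Set.Ioc (0:ℝ) 1) (hσ : 0 < σ)
    (f : EuclideanSpace ℝ (Fin d))
    (q₀ : EuclideanSpace ℝ (Fin d) → ℝ)
    (hq₀nn : ∀ y₀, 0 ≤ q₀ y₀)
    (q : EuclideanSpace ℝ (Fin d) → ℝ)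
    (hq : ∀ z, q z = (σ ^ d * (2 * Real.pi) ^ ((d : ℝ) / 2))⁻¹ *
        ∫ y₀, q₀ y₀ * Real.exp (-‖z - γ • y₀ - (1 - γ) • f‖ ^ 2 / (2 * σ ^ 2)))
    (hqpos : ∀ z, 0 < q z)
    (y : EuclideanSpace ℝ (Fin d)) (εlow ρ : ℝ) (hρ : 0 < ρ)
    -- (i) the diffused density at `y` is at least `ε_low`
    (hqge : εlow ≤ q y)
    -- (ii) the score-weighted truncation error outside the cube `‖y₀‖_∞ ≤ ρ` is at most `ε_low`
    (htrunc : ∀ i : Fin d,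
      (∫ y₀ in {y₀ : EuclideanSpace ℝ (Fin d) | ρ < supNorm y₀},
          (|y i - γ * y₀ i - (1 - γ) * f i| / σ ^ 2) * q₀ y₀ *
            ((σ ^ d * (2 * Real.pi) ^ ((d : ℝ) / 2))⁻¹ *
              Real.exp (-‖y - γ • y₀ - (1 - γ) • f‖ ^ 2 / (2 * σ ^ 2))))
        ≤ εlow)
    -- the gradient of `q` at `y`, given by differentiating under the integral sign
    (g : EuclideanSpace ℝ (Fin d))
    (hgi : ∀ i : Fin d, g i =
      -((σ ^ d * (2 * Real.pi) ^ ((d : ℝ) / 2))⁻¹ *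
        ∫ y₀, ((y i - γ * y₀ i - (1 - γ) * f i) / σ ^ 2) * q₀ y₀ *
          Real.exp (-‖y - γ • y₀ - (1 - γ) • f‖ ^ 2 / (2 * σ ^ 2)))) :
    ∀ i : Fin d, |g i / q y| ≤ (supNorm y + γ * ρ + (1 - γ) * supNorm f) / σ ^ 2 + 1 := by
  intro i
  set C := (σ ^ d * (2 * Real.pi) ^ ((d : ℝ) / 2))⁻¹
  set E := fun y₀ => Real.exp (-‖y - γ • y₀ - (1 - γ) • f‖ ^ 2 / (2 * σ ^ 2))
  set F := fun y₀ : EuclideanSpace ℝ (Fin d) =>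
    ((y i - γ * y₀ i - (1 - γ) * f i) / σ ^ 2) * q₀ y₀ * E y₀
  set S := {y₀ : EuclideanSpace ℝ (Fin d) | ρ < supNorm y₀}
  set A := supNorm y + γ * ρ + (1 - γ) * supNorm f
  have hC : 0 < C := by positivity
  have hqy : q y = C * ∫ y₀, q₀ y₀ * E y₀ := hq y
  have hS : MeasurableSet S := measurableSet_lt measurable_const measurable_supNorm
  have habsF : ∀ x, |F x| = (|y i - γ * x i - (1 - γ) * f i| / σ ^ 2) * q₀ x * E x := fun x => by
    simp only [F, abs_mul, abs_div, abs_sq, abs_of_nonneg (hq₀nn x), E, Real.abs_exp]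
  have hout : C * ∫ x in S, |F x| ≤ q y := by
    rw [← integral_const_mul]
    refine ((setIntegral_congr_fun hS fun x _ => ?_).trans_le (htrunc i)).trans hqge
    rw [habsF]; ring
  have hin : ∀ x ∈ Sᶜ, |F x| ≤ A / σ ^ 2 * (q₀ x * E x) := fun x hx => by
    have := hq₀nn x
    have : 0 ≤ E x := (Real.exp_pos _).le
    have := abs_sub_mul_sub_mul_le_of_supNorm_le hγ.1.le hγ.2 y x f (not_lt.1 hx) i
    rw [habsF, ← mul_assoc]
    gcongr
  have hA : 0 ≤ A := add_nonneg (add_nonneg (supNorm_nonneg y) (mul_nonneg hγ.1.le hρ.le))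
    (mul_nonneg (sub_nonneg.2 hγ.2) (supNorm_nonneg f))
  -- `0 < q y` forces integrability, since a non-integrable integrand has integral `0`
  have hF := abs_integral_le_mul_integral_of_setIntegral_abs_le hS (div_nonneg hA (sq_nonneg σ))
    (.of_integral_ne_zero (right_ne_zero_of_mul (hqy ▸ (hqpos y).ne')))
    (.of_forall fun x => mul_nonneg (hq₀nn x) (Real.exp_pos _).le) hin
    (le_of_mul_le_mul_left (hqy ▸ hout) hC)
  rw [abs_div, abs_of_pos (hqpos y), div_le_iff₀ (hqpos y), hgi i, abs_neg, abs_mul,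
    abs_of_pos hC, hqy, mul_left_comm]
  exact mul_le_mul_of_nonneg_left hF hC.le

/-- Lemma 3 of the paper: bound on the conditional score function `∇ log q(y | f_φ(x))`,
under the data-domain truncation (radius `ρ`) and conditional-density truncation
(threshold `ε_low`) hypotheses. The gradient of the diffused density is obtained by
differentiating under the integral sign. -/
theorem conditional_score_bound
    (d : ℕ) (hd : 1 ≤ d) (γ σ : ℝ) (hγ : γ ∈ Set.Ioc (0:ℝ) 1) (hσ : 0 < σ)
    (f : EuclideanSpace ℝ (Fin d))
    (q₀ : EuclideanSpace ℝ (Fin d) → ℝ)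
    (hq₀m : Measurable q₀) (hq₀nn : ∀ y₀, 0 ≤ q₀ y₀)
    (hq₀dens : ∫ y₀, q₀ y₀ = 1)
    (c₁ c₂ : ℝ) (hc₁ : 0 < c₁) (hc₂ : 0 < c₂)
    (htail : ∀ y₀, q₀ y₀ ≤ c₁ * Real.exp (-c₂ * ‖y₀‖ ^ 2 / 2))
    (q : EuclideanSpace ℝ (Fin d) → ℝ)
    (hq : ∀ z, q z = (σ ^ d * (2 * Real.pi) ^ ((d : ℝ) / 2))⁻¹ *
        ∫ y₀, q₀ y₀ * Real.exp (-‖z - γ • y₀ - (1 - γ) • f‖ ^ 2 / (2 * σ ^ 2)))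
    (hqpos : ∀ z, 0 < q z)
    (y : EuclideanSpace ℝ (Fin d)) (εlow ρ : ℝ) (hεlow : 0 < εlow) (hρ : 0 < ρ)
    -- (i) the diffused density at `y` is at least `ε_low`
    (hqge : εlow ≤ q y)
    -- (ii) the score-weighted truncation error outside the cube `‖y₀‖_∞ ≤ ρ` is at most `ε_low`
    (htrunc : ∀ i : Fin d,
      (∫ y₀ in {y₀ : EuclideanSpace ℝ (Fin d) | ρ < supNorm y₀},
          (|y i - γ * y₀ i - (1 - γ) * f i| / σ ^ 2) * q₀ y₀ *
            ((σ ^ d * (2 * Real.pi) ^ ((d : ℝ) / 2))⁻¹ *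
              Real.exp (-‖y - γ • y₀ - (1 - γ) • f‖ ^ 2 / (2 * σ ^ 2))))
        ≤ εlow)
    -- the gradient of `q` at `y`, given by differentiating under the integral sign
    (g : EuclideanSpace ℝ (Fin d)) (hgrad : HasGradientAt q g y)
    (hgi : ∀ i : Fin d, g i =
      -((σ ^ d * (2 * Real.pi) ^ ((d : ℝ) / 2))⁻¹ *
        ∫ y₀, ((y i - γ * y₀ i - (1 - γ) * f i) / σ ^ 2) * q₀ y₀ *
          Real.exp (-‖y - γ • y₀ - (1 - γ) • f‖ ^ 2 / (2 * σ ^ 2)))) :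
    ∀ i : Fin d, |g i / q y| ≤ (supNorm y + γ * ρ + (1 - γ) * supNorm f) / σ ^ 2 + 1 :=
  conditional_score_bound_general d γ σ hγ hσ f q₀ hq₀nn q hq hqpos y εlow ρ hρ hqge htrunc g hgi
end

section
/- Let d ≥ 1, ε ∈ (0, 1/e), and let p be a positive integer with p ≥ 3e · log(1/ε). Let σ > 0, γ ∈ ℝ and y, y₀, f ∈ ℝ^d be such that for each i ∈ {1,…,d} the quantity x_i := ( y_i − γ y_{0,i} − (1−γ) f_i )² / (2σ²) satisfies x_i ≤ log(1/ε). Then | exp( −Σ_{i=1}^d x_i ) − Π_{i=1}^d Σ_{k=0}^{p−1} (−x_i)^k / k! | ≤ d (1 + ε^{3/e})^{d−1} ε^{3/e}. Equivalently, the d-dimensional Gaussian kernel exp( −‖ y − γ y₀ − (1−γ) f ‖²/(2σ²) ) is approximated by the product of the coordinatewise degree-(p−1) Taylor polynomials with error at most d (1 + ε^{3/e})^{d−1} ε^{3/e}. -/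
/-!
For `x ≥ 0` the Taylor remainder of `e^{-x}` is dominated by the tail `∑_{k ≥ p} x^k/k!`, and
comparing it term by term with the tail of `e^{e x}` bounds it by `e^{e x}/e^p`. When
`x ≤ log(1/ε)` and `p ≥ 3e log(1/ε)` this is at most `ε^{2e} ≤ ε^{3/e}`. Since every factor
`e^{-x_i}` lies in `[0, 1]`, every Taylor polynomial is then bounded by `1 + ε^{3/e}`, and
telescoping the difference of the two products over the `d` factors gives the claim.
-/

open Finset

theorem Finset.norm_prod_sub_prod_le {ι R : Type*} [NormedCommRing R] [NormOneClass R]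
    (s : Finset ι) {a b : ι → R} {M δ : ℝ} (ha : ∀ i ∈ s, ‖a i‖ ≤ M) (hb : ∀ i ∈ s, ‖b i‖ ≤ M)
    (hab : ∀ i ∈ s, ‖a i - b i‖ ≤ δ) :
    ‖∏ i ∈ s, a i - ∏ i ∈ s, b i‖ ≤ #s * M ^ (#s - 1) * δ := by
  classical
  induction s using Finset.induction_on with
  | empty => simp
  | @insert j s hj ih =>
    simp only [forall_mem_insert] at ha hb hab
    have hM : 0 ≤ M := (norm_nonneg _).trans ha.1
    have hδ : 0 ≤ δ := (norm_nonneg _).trans hab.1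
    have hprod_b : ‖∏ i ∈ s, b i‖ ≤ M ^ #s :=
      (Finset.norm_prod_le s b).trans <|
        (prod_le_prod (fun _ _ => norm_nonneg _) hb.2).trans_eq (prod_const M)
    rw [prod_insert hj, prod_insert hj, card_insert_of_notMem hj, Nat.add_sub_cancel,
      show a j * ∏ i ∈ s, a i - b j * ∏ i ∈ s, b i
        = a j * (∏ i ∈ s, a i - ∏ i ∈ s, b i) + (a j - b j) * ∏ i ∈ s, b i by ring]
    calc _ ≤ M * (#s * M ^ (#s - 1) * δ) + δ * M ^ #s := by
          refine (norm_add_le _ _).trans (add_le_add ?_ ?_) <;> refine (norm_mul_le _ _).trans ?_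
          · exact mul_le_mul ha.1 (ih ha.2 hb.2 hab.2) (norm_nonneg _) hM
          · exact mul_le_mul hab.1 hprod_b (norm_nonneg _) hδ
      _ = ↑(#s + 1) * M ^ #s * δ := by
          rcases Nat.eq_zero_or_pos #s with hs | hs
          · simp [hs]
          · rw [show M ^ #s = M * M ^ (#s - 1) by rw [← pow_succ', Nat.sub_add_cancel hs]]
            push_cast; ring

namespace Real

theorem abs_exp_sub_sum_range_le (x : ℝ) (n : ℕ) :
    |exp x - ∑ m ∈ range n, x ^ m / m.factorial|
      ≤ exp |x| - ∑ m ∈ range n, |x| ^ m / m.factorial := by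
  have h := Complex.norm_exp_sub_sum_le_exp_norm_sub_sum x n
  rw [Complex.norm_real, Real.norm_eq_abs] at h
  exact_mod_cast h

theorem pow_mul_exp_sub_sum_range_le {x c : ℝ} (hx : 0 ≤ x) (hc : 1 ≤ c) (n : ℕ) :
    c ^ n * (exp x - ∑ m ∈ range n, x ^ m / m.factorial)
      ≤ exp (c * x) - ∑ m ∈ range n, (c * x) ^ m / m.factorial := by
  have tail (z : ℝ) : HasSum (fun k => z ^ (k + n) / (k + n).factorial)
      (exp z - ∑ m ∈ range n, z ^ m / m.factorial) := by
    rw [exp_eq_exp_ℝ]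
    exact (hasSum_nat_add_iff' n).mpr (NormedSpace.expSeries_div_hasSum_exp z)
  refine hasSum_le (fun k => ?_) ((tail x).mul_left (c ^ n)) (tail (c * x))
  rw [mul_div_assoc', mul_pow]
  gcongr
  exact Nat.le_add_left n k

theorem exp_sub_sum_range_le_exp_mul_div_pow {x c : ℝ} (hx : 0 ≤ x) (hc : 1 ≤ c) (n : ℕ) :
    exp x - ∑ m ∈ range n, x ^ m / m.factorial ≤ exp (c * x) / c ^ n := by
  have hcx : 0 ≤ c * x := by positivity
  have hsum : 0 ≤ ∑ m ∈ range n, (c * x) ^ m / m.factorial := by positivity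
  rw [le_div_iff₀' (by positivity)]
  linarith [pow_mul_exp_sub_sum_range_le hx hc n]

theorem abs_exp_neg_sub_sum_range_le_rpow {ε x : ℝ} {p : ℕ} (hε₀ : 0 < ε) (hε₁ : ε ≤ 1)
    (hx₀ : 0 ≤ x) (hx : x ≤ log (1 / ε)) (hp : 3 * exp 1 * log (1 / ε) ≤ p) :
    |exp (-x) - ∑ k ∈ range p, (-x) ^ k / k.factorial| ≤ ε ^ (3 / exp 1) := by
  have he : 2 ≤ exp 1 := by linarith [add_one_le_exp 1]
  calc |exp (-x) - ∑ k ∈ range p, (-x) ^ k / k.factorial|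
      ≤ exp x - ∑ k ∈ range p, x ^ k / k.factorial := by
        simpa [abs_of_nonneg hx₀] using abs_exp_sub_sum_range_le (-x) p
    _ ≤ exp (exp 1 * x) / exp 1 ^ p :=
        exp_sub_sum_range_le_exp_mul_div_pow hx₀ (one_le_exp zero_le_one) p
    _ = exp (exp 1 * x - p) := by rw [exp_one_pow, exp_sub]
    _ ≤ exp (log ε * (2 * exp 1)) := by
        rw [one_div, log_inv] at hx hp
        gcongr
        nlinarith
    _ = ε ^ (2 * exp 1) := (rpow_def_of_pos hε₀ _).symm
    _ ≤ ε ^ (3 / exp 1) := by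
        refine rpow_le_rpow_of_exponent_ge hε₀ hε₁ ?_
        rw [div_le_iff₀ (by positivity)]
        nlinarith

end Real

theorem gaussian_kernel_taylor_product_bound_general
    (d : ℕ)
    (ε : ℝ) (hε : ε ∈ Set.Ioo (0:ℝ) (1 / Real.exp 1))
    (p : ℕ)
    (hple : 3 * Real.exp 1 * Real.log (1 / ε) ≤ (p : ℝ))
    (σ γ : ℝ)
    (y y₀ f : Fin d → ℝ)
    (x : Fin d → ℝ)
    (hx : ∀ i, x i = (y i - γ * y₀ i - (1 - γ) * f i) ^ 2 / (2 * σ ^ 2))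
    (hxle : ∀ i, x i ≤ Real.log (1 / ε)) :
    |Real.exp (-∑ i, x i) -
        ∏ i, ∑ k ∈ Finset.range p, (-(x i)) ^ k / (Nat.factorial k : ℝ)|
      ≤ (d : ℝ) * (1 + ε ^ ((3:ℝ) / Real.exp 1)) ^ (d - 1) * ε ^ ((3:ℝ) / Real.exp 1) := by
  obtain ⟨hε₀, hε_lt⟩ := hε
  have hε₁ : ε ≤ 1 :=
    hε_lt.le.trans <| (div_le_one (Real.exp_pos 1)).2 (Real.one_le_exp zero_le_one)
  have hx₀ (i : Fin d) : 0 ≤ x i := by rw [hx i]; positivity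
  have hexp (i : Fin d) : |Real.exp (-x i)| ≤ 1 := by
    rw [abs_of_pos (Real.exp_pos _), Real.exp_le_one_iff, neg_nonpos]
    exact hx₀ i
  have htaylor (i : Fin d) :=
    Real.abs_exp_neg_sub_sum_range_le_rpow hε₀ hε₁ (hx₀ i) (hxle i) hple
  rw [← sum_neg_distrib, Real.exp_sum]
  simpa using norm_prod_sub_prod_le univ (M := 1 + ε ^ ((3:ℝ) / Real.exp 1))
    (fun i _ => (hexp i).trans (le_add_of_nonneg_right (by positivity)))
    (fun i _ => (norm_le_norm_add_norm_sub (Real.exp (-x i)) _).trans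
      (add_le_add (hexp i) (htaylor i)))
    (fun i _ => htaylor i)

/-- Taylor approximation of the `d`-dimensional Gaussian transition kernel of the CARD
diffusion (equation (BB15) of the paper): on the truncated domain where each coordinate
exponent `x_i = (y_i − γ y_{0,i} − (1−γ) f_i)²/(2σ²)` is at most `log(1/ε)`, the kernel
`exp(−Σ x_i)` is approximated by the product of coordinatewise degree-`(p−1)` Taylor
polynomials with error at most `d (1 + ε^{3/e})^{d−1} ε^{3/e}`. -/
theorem gaussian_kernel_taylor_product_bound
    (d : ℕ) (hd : 1 ≤ d)
    (ε : ℝ) (hε : ε ∈ Set.Ioo (0:ℝ) (1 / Real.exp 1))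
    (p : ℕ) (hp : 0 < p)
    (hple : 3 * Real.exp 1 * Real.log (1 / ε) ≤ (p : ℝ))
    (σ γ : ℝ) (hσ : 0 < σ)
    (y y₀ f : Fin d → ℝ)
    (x : Fin d → ℝ)
    (hx : ∀ i, x i = (y i - γ * y₀ i - (1 - γ) * f i) ^ 2 / (2 * σ ^ 2))
    (hxle : ∀ i, x i ≤ Real.log (1 / ε)) :
    |Real.exp (-∑ i, x i) -
        ∏ i, ∑ k ∈ Finset.range p, (-(x i)) ^ k / (Nat.factorial k : ℝ)|
      ≤ (d : ℝ) * (1 + ε ^ ((3:ℝ) / Real.exp 1)) ^ (d - 1) * ε ^ ((3:ℝ) / Real.exp 1) :=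
  gaussian_kernel_taylor_product_bound_general d ε hε p hple σ γ y y₀ f x hx hxle
end

section
/- Let d ≥ 1, σ > 0, ε_low > 0, δ₁ ≥ 0, δ₂ ≥ 0 and K ≥ 0. Let y ∈ ℝ^d, let q : ℝ^d → (0,∞) be differentiable at y with q(y) ≥ ε_low and ‖ ∇ log q(y) ‖_∞ ≤ K, and let h₁ ∈ ℝ and h₄ ∈ ℝ^d satisfy | q(y) − h₁ | ≤ δ₂ and | σ · ∂_i q(y) − h₄,i | ≤ δ₁ for each i ∈ {1,…,d}. Define the clipped score estimate ŝ = h₄ / ( σ · max(h₁, ε_low) ) ∈ ℝ^d. Then ‖ ŝ − ∇ log q(y) ‖_∞ ≤ ( δ₁ / σ + K δ₂ ) / ε_low. -/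
/-! The estimate `x' / p'` of a ratio `x / p` splits as
`x' / p' - x / p = (x' - x) / p' + (x / p) * (p - p') / p'`, so a denominator bounded below by `ε`
turns numerator error `a` and denominator error `b` into an error `(a + K b) / ε`, where `K`
bounds the true ratio. Clipping `h₁` from below at `ε_low ≤ q(y)` keeps the denominator bounded
below without moving it further from `q(y)`. -/

section

variable {𝕜 : Type*} [Field 𝕜] [LinearOrder 𝕜] [IsStrictOrderedRing 𝕜]

theorem abs_sub_max_le_of_le_of_abs_sub_le {ε p p' b : 𝕜} (hp : ε ≤ p) (hp' : |p - p'| ≤ b) :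
    |p - max p' ε| ≤ b := by
  simpa only [max_eq_left hp] using (abs_max_sub_max_le_abs p p' ε).trans hp'

theorem abs_div_sub_div_le {x x' p p' ε a b K : 𝕜} (hε : 0 < ε) (hp : p ≠ 0) (hp' : ε ≤ p')
    (hx : |x' - x| ≤ a) (hpp' : |p - p'| ≤ b) (hK : |x / p| ≤ K) :
    |x' / p' - x / p| ≤ (a + K * b) / ε := by
  have hp'pos : 0 < p' := hε.trans_le hp'
  have hsplit : x' / p' - x / p = (x' - x) / p' + x / p * ((p - p') / p') := by
    field_simp
    ring
  have hnum : |(x' - x) / p'| ≤ a / ε := by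
    rw [abs_div, abs_of_pos hp'pos]
    exact div_le_div₀ ((abs_nonneg _).trans hx) hx hε hp'
  have hden : |x / p * ((p - p') / p')| ≤ K * (b / ε) := by
    rw [abs_mul, abs_div (p - p'), abs_of_pos hp'pos]
    exact mul_le_mul hK (div_le_div₀ ((abs_nonneg _).trans hpp') hpp' hε hp')
      (by positivity) ((abs_nonneg _).trans hK)
  calc |x' / p' - x / p|
      ≤ |(x' - x) / p'| + |x / p * ((p - p') / p')| := hsplit ▸ abs_add_le _ _
    _ ≤ a / ε + K * (b / ε) := add_le_add hnum hden
    _ = (a + K * b) / ε := by ring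

end

theorem clipped_score_estimate_error_general
    (d : ℕ)
    (σ εlow δ₁ δ₂ K : ℝ)
    (hσ : 0 < σ) (hεlow : 0 < εlow)
    (y : EuclideanSpace ℝ (Fin d))
    (q : EuclideanSpace ℝ (Fin d) → ℝ)
    (g : EuclideanSpace ℝ (Fin d))
    (hqlow : εlow ≤ q y)
    (hscore : ∀ i : Fin d, |g i / q y| ≤ K)
    (h₁ : ℝ) (h₄ : Fin d → ℝ)
    (hh₁ : |q y - h₁| ≤ δ₂)
    (hh₄ : ∀ i : Fin d, |σ * g i - h₄ i| ≤ δ₁)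
    (shat : Fin d → ℝ) (hshat : ∀ i, shat i = h₄ i / (σ * max h₁ εlow)) :
    ∀ i : Fin d, |shat i - g i / q y| ≤ (δ₁ / σ + K * δ₂) / εlow := by
  intro i
  have hnum : |h₄ i / σ - g i| ≤ δ₁ / σ := by
    rw [← mul_div_cancel_left₀ (g i) hσ.ne', ← sub_div, abs_div, abs_of_pos hσ, abs_sub_comm]
    exact div_le_div_of_nonneg_right (hh₄ i) hσ.le
  rw [hshat, ← div_div]
  exact abs_div_sub_div_le hεlow (hεlow.trans_le hqlow).ne' (le_max_right h₁ εlow) hnum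
    (abs_sub_max_le_of_le_of_abs_sub_le hqlow hh₁) (hscore i)

/-- Final assembly step of the proof of Theorem 2 of the paper: the clipped score
estimate `shat = h₄ / (σ · max(h₁, ε_low))`, built from approximations `h₄ ≈ σ∇q(y)` (error
`δ₁` per coordinate) and `h₁ ≈ q(y)` (error `δ₂`), deviates from the true conditional
score `∇ log q(y) = ∇q(y)/q(y)` by at most `(δ₁/σ + K δ₂)/ε_low` in the sup norm, on the
region where `q(y) ≥ ε_low` and `‖∇ log q(y)‖_∞ ≤ K`. -/
theorem clipped_score_estimate_error
    (d : ℕ) (hd : 1 ≤ d)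
    (σ εlow δ₁ δ₂ K : ℝ)
    (hσ : 0 < σ) (hεlow : 0 < εlow) (hδ₁ : 0 ≤ δ₁) (hδ₂ : 0 ≤ δ₂) (hK : 0 ≤ K)
    (y : EuclideanSpace ℝ (Fin d))
    (q : EuclideanSpace ℝ (Fin d) → ℝ) (hqpos : ∀ z, 0 < q z)
    (g : EuclideanSpace ℝ (Fin d)) (hgrad : HasGradientAt q g y)
    (hqlow : εlow ≤ q y)
    (hscore : ∀ i : Fin d, |g i / q y| ≤ K)
    (h₁ : ℝ) (h₄ : Fin d → ℝ)
    (hh₁ : |q y - h₁| ≤ δ₂)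
    (hh₄ : ∀ i : Fin d, |σ * g i - h₄ i| ≤ δ₁)
    (shat : Fin d → ℝ) (hshat : ∀ i, shat i = h₄ i / (σ * max h₁ εlow)) :
    ∀ i : Fin d, |shat i - g i / q y| ≤ (δ₁ / σ + K * δ₂) / εlow :=
  clipped_score_estimate_error_general d σ εlow δ₁ δ₂ K hσ hεlow y q g hqlow hscore h₁ h₄ hh₁ hh₄
    shat hshat
end
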